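/- If Z′ is a Parisian walk, then the real-valued process X_t := (2/3)·Re( (1 − ζ²)·Z′_t ) is a simple walk: X_0 ∈ ℤ almost surely (indeed if Z′_t = a + bζ with a, b ∈ ℤ then X_t = a − b), X is a martingale, and for every t the conditional distribution of X_{t+1} − X_t given ℱ_t is uniform on {−1, 0, 1}. -/

import Mathlib

open MeasureTheory Complex
open scoped Classical

noncomputable section

namespace Parisian

/-- The primitive cube root of unity `ζ = (−1 + √3·i)/2`. -/
def zeta : ℂ := (-1 + Real.sqrt 3 * Complex.I) / 2

/-- The lattice `ℤ[ζ] = {a + bζ : a, b ∈ ℤ}` as a subset of `ℂ`. -/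
def Zlat : Set ℂ := {z | ∃ a b : ℤ, z = (a : ℂ) + (b : ℂ) * zeta}

/-- The set of admissible steps `{1, ζ, ζ²}`. -/
def steps : Set ℂ := {1, zeta, zeta ^ 2}

/-- The set `P = {0, 1, 1 + ζ}`. -/
def Pset : Set ℂ := {0, 1, 1 + zeta}

/-- Graph distance from the set `P` in `ℤ[ζ]`: the least `n` such that
`z = p + w₁ + ⋯ + w_n` with `p ∈ P` and each `wᵢ ∈ {1, ζ, ζ²}`. -/
def gdist (z : ℂ) : ℕ :=
  sInf {n : ℕ | ∃ p ∈ Pset, ∃ w : Fin n → ℂ, (∀ i, w i ∈ steps) ∧ z = p + ∑ i, w i}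

def A1 : Set ℂ := {z | ∃ k1 k2 : ℤ, z = (k1 : ℂ) + (k2 : ℂ) * zeta ^ 2 ∧ 1 < k2 + 1 ∧ k2 + 1 < k1}
def A2 : Set ℂ := {z | ∃ k1 k2 : ℤ, z = -(k1 : ℂ) * zeta - (k2 : ℂ) ∧ 0 ≤ k2 ∧ k2 < k1}
def A3 : Set ℂ := {z | ∃ k1 k2 : ℤ, z = -(k1 : ℂ) - (k2 : ℂ) * zeta ∧ 0 < k2 ∧ k2 < k1}
def A4 : Set ℂ := {z | ∃ k1 k2 : ℤ, z = (k1 : ℂ) * zeta + (k2 : ℂ) * zeta ^ 2 ∧ 0 ≤ k2 ∧ k2 < k1}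
def A5 : Set ℂ := {z | ∃ k1 k2 : ℤ, z = -(k1 : ℂ) * zeta ^ 2 - (k2 : ℂ) ∧ 1 < k2 + 1 ∧ k2 + 1 < k1}
def A6 : Set ℂ := {z | ∃ k1 k2 : ℤ, z = (k1 : ℂ) + (k2 : ℂ) * zeta ∧ 0 < k2 ∧ k2 < k1}

def B1 : Set ℂ := {z | ∃ n : ℤ, z = (n : ℂ) ∧ 2 ≤ n}
def B2 : Set ℂ := {z | ∃ n : ℤ, z = (n : ℂ) * zeta - zeta ^ 2 ∧ 1 ≤ n}
def B3 : Set ℂ := {z | ∃ n : ℤ, z = (n : ℂ) * zeta ^ 2 ∧ 1 ≤ n}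
def B4 : Set ℂ := {z | ∃ n : ℤ, z = (n : ℂ) ∧ n ≤ -1}
def B5 : Set ℂ := {z | ∃ n : ℤ, z = 1 + (n : ℂ) * zeta ∧ n ≤ -1}
def B6 : Set ℂ := {z | ∃ n : ℤ, z = (n : ℂ) * zeta ^ 2 ∧ n ≤ -2}

/-- The closure `Ā₁ = A₁ ∪ B₁ ∪ B₅ ∪ {1}`. -/
def Abar1 : Set ℂ := A1 ∪ B1 ∪ B5 ∪ {1}
/-- The closure `Ā₃ = A₃ ∪ B₃ ∪ B₄ ∪ {0}`. -/
def Abar3 : Set ℂ := A3 ∪ B3 ∪ B4 ∪ {0}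
/-- The closure `Ā₅ = A₅ ∪ B₂ ∪ B₆ ∪ {1+ζ}`. -/
def Abar5 : Set ℂ := A5 ∪ B2 ∪ B6 ∪ {1 + zeta}

/-- `φ(z) = 1_{Ā₁}(z) + ζ·1_{Ā₃}(z) + ζ²·1_{Ā₅}(z)`. -/
def phi (z : ℂ) : ℂ :=
  Abar1.indicator 1 z + zeta * Abar3.indicator 1 z + zeta ^ 2 * Abar5.indicator 1 z

/-- `ψ(z) = 1_{A₆}(z) + ζ·1_{A₄}(z) + ζ²·1_{A₂}(z)`. -/
def psi (z : ℂ) : ℂ :=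
  A6.indicator 1 z + zeta * A4.indicator 1 z + zeta ^ 2 * A2.indicator 1 z

variable {Ω : Type*} {mΩ : MeasurableSpace Ω}

/-- A Parisian walk: an adapted integrable martingale starting in `ℤ[ζ]` a.s.,
with increments in `{1, ζ, ζ²}` a.s. -/
def IsParisian (μ : Measure Ω) (ℱ : Filtration ℕ mΩ) (Z : ℕ → Ω → ℂ) : Prop :=
  Martingale Z ℱ μ ∧ (∀ᵐ ω ∂μ, Z 0 ω ∈ Zlat) ∧
    ∀ t : ℕ, ∀ᵐ ω ∂μ, Z (t + 1) ω - Z t ω ∈ steps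

/-- The local time of a walk: the number of exits from `Ā₁`, `Ā₃`, `Ā₅` before time `t`. -/
def localTime (Z : ℕ → Ω → ℂ) (t : ℕ) (ω : Ω) : ℕ :=
  ∑ u ∈ Finset.range t,
    ((if Z u ω ∈ Abar1 ∧ Z (u + 1) ω ∉ Abar1 then 1 else 0) +
     (if Z u ω ∈ Abar3 ∧ Z (u + 1) ω ∉ Abar3 then 1 else 0) +
     (if Z u ω ∈ Abar5 ∧ Z (u + 1) ω ∉ Abar5 then 1 else 0))

/-- `ΔZ_S = ∏_{i : sᵢ = ζ} ΔZᵢ · ∏_{i : sᵢ = ζ²} conj(ΔZᵢ)` where `ΔZᵢ = Zᵢ − Z_{i−1}`,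
for a tuple `S : Fin t → ℂ` (with entries in `{1, ζ, ζ²}`). -/
def deltaZS (Z : ℕ → Ω → ℂ) (t : ℕ) (S : Fin t → ℂ) (ω : Ω) : ℂ :=
  ∏ i : Fin t,
    (if S i = zeta then Z ((i : ℕ) + 1) ω - Z (i : ℕ) ω
     else if S i = zeta ^ 2 then starRingEnd ℂ (Z ((i : ℕ) + 1) ω - Z (i : ℕ) ω)
     else 1)

end Parisian


/-! The steps `1, ζ, ζ²` are the cube roots of unity, so for steps `d, s` the indicator of
`d = s` is the real-affine function `1/3 + (2/3)·Re(s̄·d)` of `d` (a discrete Fourier inversion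
on `ℤ/3`). Conditioning a martingale increment `D` therefore gives
`P(D = s | ℱ_t) = 1/3 + (2/3)·Re(s̄·E[D | ℱ_t]) = 1/3`. The real-linear map
`z ↦ (2/3)·Re((1 − ζ²)·z)` sends `a + bζ` to `a − b` and the three steps bijectively onto
`{1, −1, 0}`, so it carries the Parisian walk to a simple walk. -/

open ComplexConjugate

theorem MeasureTheory.Martingale.continuousLinearMap_comp
    {Ω ι E F : Type*} [Preorder ι] {m₀ : MeasurableSpace Ω} {μ : Measure Ω} {ℱ : Filtration ι m₀}
    [NormedAddCommGroup E] [NormedSpace ℝ E] [CompleteSpace E]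
    [NormedAddCommGroup F] [NormedSpace ℝ F] [CompleteSpace F]
    {f : ι → Ω → E} (hf : Martingale f ℱ μ) (T : E →L[ℝ] F) :
    Martingale (fun n => T ∘ f n) ℱ μ :=
  ⟨fun n => T.continuous.comp_stronglyMeasurable (hf.stronglyAdapted n), fun _ j hij =>
    (T.comp_condExp_comm (hf.integrable j)).symm.trans ((hf.condExp_ae_eq hij).fun_comp T)⟩

theorem MeasureTheory.Martingale.condExp_sub_ae_eq_zero
    {Ω ι E : Type*} [Preorder ι] {m₀ : MeasurableSpace Ω} {μ : Measure Ω} {ℱ : Filtration ι m₀}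
    [NormedAddCommGroup E] [NormedSpace ℝ E] [CompleteSpace E]
    {f : ι → Ω → E} (hf : Martingale f ℱ μ) {i j : ι} (hij : i ≤ j) :
    μ[f j - f i | ℱ i] =ᵐ[μ] 0 := by
  filter_upwards [condExp_sub (hf.integrable j) (hf.integrable i) (ℱ i),
    hf.condExp_ae_eq hij, hf.condExp_ae_eq (le_refl i)] with ω hsub hj hi
  simp [hsub, hj, hi]

namespace Parisian

theorem zeta_sq : zeta ^ 2 = -1 - zeta := by
  have h : (Real.sqrt 3 : ℂ) ^ 2 = 3 := by
    rw [← Complex.ofReal_pow, Real.sq_sqrt (by norm_num : (0 : ℝ) ≤ 3)]; norm_num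
  rw [zeta]
  linear_combination (I ^ 2 / 4) * h + (3 / 4) * I_sq

theorem zeta_re : zeta.re = -(1 / 2) := by simp [zeta]; norm_num

theorem zeta_sq_re : (zeta ^ 2).re = -(1 / 2) := by
  rw [zeta_sq]; simp [zeta_re]; norm_num

theorem zeta_im : zeta.im = √3 / 2 := by simp [zeta]

theorem zeta_sq_im : (zeta ^ 2).im = -(√3 / 2) := by
  rw [zeta_sq]; simp [zeta_im]

theorem conj_zeta : conj zeta = zeta ^ 2 :=
  Complex.ext (by simp [zeta_re, zeta_sq_re]) (by simp [zeta_im, zeta_sq_im])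

theorem conj_zeta_sq : conj (zeta ^ 2) = zeta := by
  rw [← conj_zeta, conj_conj]

def latticeCoord : ℂ →L[ℝ] ℝ :=
  (2 / 3 : ℝ) • reCLM.comp ((ContinuousLinearMap.mul ℂ ℂ (1 - zeta ^ 2)).restrictScalars ℝ)

theorem latticeCoord_apply (z : ℂ) : latticeCoord z = 2 / 3 * ((1 - zeta ^ 2) * z).re := rfl

theorem latticeCoord_add_mul_zeta (a b : ℝ) : latticeCoord (a + b * zeta) = a - b := by
  have h : (1 - zeta ^ 2) * (a + b * zeta) = ((2 * a - b : ℝ) : ℂ) + ((a + b : ℝ) : ℂ) * zeta := by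
    push_cast; linear_combination ((b : ℂ) - a - b * zeta) * zeta_sq
  rw [latticeCoord_apply, h]
  simp [zeta_re]
  ring

theorem latticeCoord_one : latticeCoord 1 = 1 := by
  simpa using latticeCoord_add_mul_zeta 1 0

theorem latticeCoord_zeta : latticeCoord zeta = -1 := by
  simpa using latticeCoord_add_mul_zeta 0 1

theorem latticeCoord_zeta_sq : latticeCoord (zeta ^ 2) = 0 := calc
  latticeCoord (zeta ^ 2) = latticeCoord ((-1 : ℝ) + (-1 : ℝ) * zeta) := by
    rw [zeta_sq]; push_cast; ring_nf
  _ = 0 := by rw [latticeCoord_add_mul_zeta]; norm_num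

theorem injOn_latticeCoord_steps : Set.InjOn latticeCoord steps := by
  rintro d (rfl | rfl | rfl) s (rfl | rfl | rfl) h <;>
    first | rfl | norm_num [latticeCoord_one, latticeCoord_zeta, latticeCoord_zeta_sq] at h

theorem latticeCoord_image_steps : latticeCoord '' steps = {-1, 0, 1} := by
  simp only [steps, Set.image_insert_eq, Set.image_singleton, latticeCoord_one,
    latticeCoord_zeta, latticeCoord_zeta_sq]
  grind

theorem zeta_ne_one : zeta ≠ 1 := fun h => by
  have h' := congrArg latticeCoord h
  norm_num [latticeCoord_zeta, latticeCoord_one] at h'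

theorem zeta_sq_ne_one : zeta ^ 2 ≠ 1 := fun h => by
  have h' := congrArg latticeCoord h
  norm_num [latticeCoord_zeta_sq, latticeCoord_one] at h'

theorem zeta_sq_ne_zeta : zeta ^ 2 ≠ zeta := fun h => by
  have h' := congrArg latticeCoord h
  norm_num [latticeCoord_zeta_sq, latticeCoord_zeta] at h'

theorem ite_eq_re_conj_mul_of_mem_steps {d s : ℂ} (hd : d ∈ steps) (hs : s ∈ steps) :
    (if d = s then (1 : ℝ) else 0) = 1 / 3 + 2 / 3 * (conj s * d).re := by
  rcases hd with rfl | rfl | rfl <;> rcases hs with rfl | rfl | rfl <;>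
    simp only [zeta_ne_one, zeta_ne_one.symm, zeta_sq_ne_one, zeta_sq_ne_one.symm, zeta_sq_ne_zeta,
      zeta_sq_ne_zeta.symm, ↓reduceIte] <;>
    norm_num [conj_zeta, conj_zeta_sq, zeta_re, zeta_sq_re, zeta_im, zeta_sq_im, div_mul_div_comm]

theorem condExp_indicator_eq_one_third {Ω : Type*} {m m₀ : MeasurableSpace Ω} {μ : Measure Ω}
    [IsFiniteMeasure μ] (hm : m ≤ m₀) {D : Ω → ℂ} (hD : Integrable D μ)
    (hD0 : μ[D | m] =ᵐ[μ] 0) (hsteps : ∀ᵐ ω ∂μ, D ω ∈ steps) {s : ℂ} (hs : s ∈ steps) :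
    μ[{ω | D ω = s}.indicator (fun _ => (1 : ℝ)) | m] =ᵐ[μ] fun _ => 1 / 3 := by
  let T : ℂ →L[ℝ] ℝ :=
    (2 / 3 : ℝ) • reCLM.comp ((ContinuousLinearMap.mul ℂ ℂ (conj s)).restrictScalars ℝ)
  have hind : {ω | D ω = s}.indicator (fun _ => (1 : ℝ)) =ᵐ[μ] fun ω => T (D ω) + 1 / 3 := by
    filter_upwards [hsteps] with ω hω
    simp only [Set.indicator_apply, Set.mem_ofPred_eq, ite_eq_re_conj_mul_of_mem_steps hω hs]
    exact add_comm _ _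
  calc μ[{ω | D ω = s}.indicator (fun _ => (1 : ℝ)) | m]
      =ᵐ[μ] μ[fun ω => T (D ω) + 1 / 3 | m] := condExp_congr_ae hind
    _ =ᵐ[μ] fun ω => T (μ[D | m] ω) + 1 / 3 := (T.comp_condExp_add_const_comm hm hD _).symm
    _ =ᵐ[μ] fun _ => 1 / 3 := by
      filter_upwards [hD0] with ω hω
      simp [hω]

/-- If `Z′` is a Parisian walk then `X_t = (2/3)·Re((1 − ζ²)·Z′_t)` is a simple walk:
`X₀ ∈ ℤ` a.s. (indeed `(2/3)·Re((1−ζ²)(a+bζ)) = a − b` for `a, b ∈ ℤ`), `X` is a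
martingale, and the conditional distribution of each increment given `ℱ_t` is
uniform on `{−1, 0, 1}`. -/
theorem re_of_parisian_is_simple_walk
    {Ω : Type*} {mΩ : MeasurableSpace Ω} (μ : Measure Ω) [IsProbabilityMeasure μ]
    (ℱ : Filtration ℕ mΩ) (Z' : ℕ → Ω → ℂ) (hZ' : IsParisian μ ℱ Z')
    (X : ℕ → Ω → ℝ) (hX : ∀ t ω, X t ω = (2 / 3) * ((1 - zeta ^ 2) * Z' t ω).re) :
    (∀ a b : ℤ, (2 / 3 : ℝ) * ((1 - zeta ^ 2) * ((a : ℂ) + (b : ℂ) * zeta)).re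
      = (a : ℝ) - (b : ℝ)) ∧
    (∀ᵐ ω ∂μ, ∃ n : ℤ, X 0 ω = (n : ℝ)) ∧
    Martingale X ℱ μ ∧
    ∀ t : ℕ, ∀ c ∈ ({-1, 0, 1} : Set ℝ),
      μ[Set.indicator {ω | X (t + 1) ω - X t ω = c} (fun _ => (1 : ℝ)) | ℱ t]
        =ᵐ[μ] fun _ => 1 / 3 := by
  obtain ⟨hmart, hstart, hsteps⟩ := hZ'
  obtain rfl : X = fun t => latticeCoord ∘ Z' t := funext fun t => funext (hX t)
  refine ⟨fun a b => latticeCoord_add_mul_zeta a b, ?_, hmart.continuousLinearMap_comp _, ?_⟩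
  · filter_upwards [hstart] with ω ⟨a, b, hab⟩
    exact ⟨a - b, by simpa [hab] using latticeCoord_add_mul_zeta a b⟩
  · intro t c hc
    rw [← latticeCoord_image_steps] at hc
    obtain ⟨s, hs, rfl⟩ := hc
    refine (condExp_congr_ae ?_).trans (condExp_indicator_eq_one_third (ℱ.le t)
      ((hmart.integrable _).sub (hmart.integrable _)) (hmart.condExp_sub_ae_eq_zero t.le_succ)
      (hsteps t) hs)
    filter_upwards [hsteps t] with ω hω
    simp only [Set.indicator_apply, Set.mem_ofPred_eq, Function.comp_apply, ← map_sub,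
      Pi.sub_apply, injOn_latticeCoord_steps.eq_iff hω hs]

end Parisian
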